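/- arXiv:2304.08143 — 2 statements merged into one kernel-verified Lean document; each statement's English description precedes it below -/
import Mathlib

section
/- For every integer N ≥ 3, Φ(N) = 2 · Σ_m d_{(m+N)/2}((N² − 4 − m²)/4), where the sum ranges over all integers m with m² < N² − 4 and m ≡ N (mod 2). -/
open Matrix

def A : Matrix (Fin 2) (Fin 2) ℤ := !![1, 0; 1, 1]

def B : Matrix (Fin 2) (Fin 2) ℤ := !![1, 1; 0, 1]

noncomputable def Phi (N : ℤ) : ℕ :=
  {C : Matrix (Fin 2) (Fin 2) ℤ |
    C ∈ Submonoid.closure {A, B} ∧ Matrix.trace C = N}.ncard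

/-- `dLt n x` is the number of positive divisors of `x` that are strictly less
than the real number `n`. -/
noncomputable def dLt (n : ℝ) (x : ℕ) : ℕ :=
  {k : ℕ | k ∣ x ∧ 0 < k ∧ (k : ℝ) < n}.ncard

/-!
The monoid `⟨A, B⟩` consists exactly of the nonnegative integer matrices of determinant one:
such a matrix other than the identity has one row dominating the other entrywise, and
subtracting it is left multiplication by `A⁻¹` or `B⁻¹` (the Euclidean algorithm).
Its elements of trace `N` are the matrices `!![a, b; c, N - a]` with `0 < a < N` and
`b * c = a * (N - a) - 1`. For such a factorisation `a ≤ b` holds exactly when `c < N - a`,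
so swapping `b, c` and substituting `a ↦ N - a` matches the factorisations with `a ≤ b` with
those with `b < a`. Finally `m = 2a - N` turns `(N² - 4 - m²) / 4` into `a * (N - a) - 1`
and `(m + N) / 2` into `a`.
-/

lemma A_mul (a b c d : ℤ) : A * !![a, b; c, d] = !![a, b; a + c, b + d] := by
  simp [A]

lemma B_mul (a b c d : ℤ) : B * !![a, b; c, d] = !![a + c, b + d; c, d] := by
  simp [B]

lemma det_eq_one_and_nonneg_of_mem_closure {C : Matrix (Fin 2) (Fin 2) ℤ}
    (hC : C ∈ Submonoid.closure {A, B}) : C.det = 1 ∧ ∀ i j, 0 ≤ C i j := by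
  induction hC using Submonoid.closure_induction with
  | mem X hX =>
    rcases hX with rfl | rfl <;>
      exact ⟨by simp [A, B, det_fin_two_of],
        fun i j => by fin_cases i <;> fin_cases j <;> simp [A, B]⟩
  | one => exact ⟨det_one, fun i j => by rw [one_apply]; split_ifs <;> norm_num⟩
  | mul X Y _ _ hX hY =>
    refine ⟨by rw [det_mul, hX.1, hY.1, one_mul], fun i j => ?_⟩
    rw [mul_apply]
    exact Finset.sum_nonneg fun k _ => mul_nonneg (hX.2 i k) (hY.2 k j)

lemma rows_le_or_ge_of_det_eq_one {a b c d : ℤ} (ha : 0 ≤ a) (hb : 0 ≤ b) (hc : 0 ≤ c)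
    (hd : 0 ≤ d) (hdet : a * d - b * c = 1) (hne : !![a, b; c, d] ≠ 1) :
    (a ≤ c ∧ b ≤ d) ∨ (c ≤ a ∧ d ≤ b) := by
  by_contra! h
  rcases lt_trichotomy a c with hac | rfl | hac
  · nlinarith [h.1 hac.le]
  · linarith [h.1 le_rfl, h.2 le_rfl]
  · have hdb := h.2 hac.le
    have hb0 : b = 0 := by nlinarith
    have hc0 : c = 0 := by nlinarith
    subst hb0 hc0
    obtain ⟨rfl, rfl⟩ : a = 1 ∧ d = 1 := by
      have := Int.eq_one_of_mul_eq_one_right ha (by simpa using hdet)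
      subst this; simpa using hdet
    exact hne (one_fin_two).symm

lemma mem_closure_of_det_eq_one {a b c d : ℤ} (ha : 0 ≤ a) (hb : 0 ≤ b) (hc : 0 ≤ c)
    (hd : 0 ≤ d) (hdet : a * d - b * c = 1) : !![a, b; c, d] ∈ Submonoid.closure {A, B} := by
  obtain ⟨n, hn⟩ : ∃ n : ℕ, a + b + c + d ≤ n :=
    ⟨(a + b + c + d).toNat, Int.self_le_toNat _⟩
  induction n generalizing a b c d with
  | zero =>
    obtain ⟨rfl, rfl⟩ : a = 0 ∧ b = 0 := by push_cast at hn; omega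
    simp at hdet
  | succ n ih =>
    by_cases hne : !![a, b; c, d] = 1
    · exact hne ▸ one_mem _
    rcases rows_le_or_ge_of_det_eq_one ha hb hc hd hdet hne with ⟨hac, hbd⟩ | ⟨hca, hdb⟩
    · have hab : 0 < a + b := by nlinarith
      have hmem := ih ha hb (sub_nonneg.2 hac) (sub_nonneg.2 hbd) (by linarith)
        (by push_cast at hn; linarith)
      rw [← sub_add_cancel c a, ← sub_add_cancel d b, add_comm (c - a), add_comm (d - b),
        ← A_mul]
      exact mul_mem (Submonoid.subset_closure (by simp)) hmem
    · have hcd : 0 < c + d := by nlinarith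
      have hmem := ih (sub_nonneg.2 hca) (sub_nonneg.2 hdb) hc hd (by linarith)
        (by push_cast at hn; linarith)
      rw [← sub_add_cancel a c, ← sub_add_cancel b d, ← B_mul]
      exact mul_mem (Submonoid.subset_closure (by simp)) hmem

lemma mem_closure_A_B_iff {C : Matrix (Fin 2) (Fin 2) ℤ} :
    C ∈ Submonoid.closure {A, B} ↔ C.det = 1 ∧ ∀ i j, 0 ≤ C i j := by
  refine ⟨det_eq_one_and_nonneg_of_mem_closure, fun ⟨hdet, hC⟩ => ?_⟩
  rw [det_fin_two] at hdet
  rw [eta_fin_two C]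
  exact mem_closure_of_det_eq_one (hC 0 0) (hC 0 1) (hC 1 0) (hC 1 1) hdet

open Finset

lemma le_iff_lt_of_mul_add_one_eq {b c p q : ℕ} (h : b * c + 1 = p * q) (hpq : 3 ≤ p + q) :
    p ≤ b ↔ c < q := by
  constructor
  · intro hpb
    by_contra! hqc
    nlinarith [Nat.mul_le_mul hpb hqc]
  · intro hcq
    by_contra! hbp
    obtain ⟨rfl, rfl⟩ : b = 0 ∧ c = 0 := by
      constructor <;> nlinarith [Nat.mul_le_mul (Nat.succ_le_of_lt hbp) (Nat.succ_le_of_lt hcq)]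
    rcases Nat.eq_zero_or_pos p with rfl | hp <;> nlinarith

lemma card_filter_not_fst_lt {N a : ℕ} (hN : 3 ≤ N) (ha : a ≤ N) :
    #{x ∈ (a * (N - a) - 1).divisorsAntidiagonal | ¬ x.1 < a} =
      #{x ∈ (a * (N - a) - 1).divisorsAntidiagonal | x.1 < N - a} := by
  calc #{x ∈ (a * (N - a) - 1).divisorsAntidiagonal | ¬ x.1 < a}
      = #{x ∈ (a * (N - a) - 1).divisorsAntidiagonal | x.2 < N - a} := by
        congr 1
        refine filter_congr fun x hx => ?_
        rw [Nat.mem_divisorsAntidiagonal] at hx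
        exact not_lt.trans (le_iff_lt_of_mul_add_one_eq (by omega) (by omega))
    _ = #{x ∈ (a * (N - a) - 1).divisorsAntidiagonal | x.1 < N - a} := by
        conv_rhs => rw [← Nat.map_swap_divisorsAntidiagonal]
        rw [filter_map, card_map]
        rfl

lemma sum_card_divisorsAntidiagonal_eq_two_mul {N : ℕ} (hN : 3 ≤ N) :
    ∑ a ∈ Ico 1 N, #(a * (N - a) - 1).divisorsAntidiagonal =
      2 * ∑ a ∈ Ico 1 N, #{x ∈ (a * (N - a) - 1).divisorsAntidiagonal | x.1 < a} := by
  have reflect : ∑ a ∈ Ico 1 N, #{x ∈ (a * (N - a) - 1).divisorsAntidiagonal | x.1 < N - a} =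
      ∑ a ∈ Ico 1 N, #{x ∈ (a * (N - a) - 1).divisorsAntidiagonal | x.1 < a} := by
    have := sum_Ico_reflect
      (fun a => #{x ∈ (a * (N - a) - 1).divisorsAntidiagonal | x.1 < a}) 1 (Nat.le_succ N)
    simp only [Nat.add_sub_cancel, Nat.add_sub_cancel_left] at this
    rw [← this]
    refine sum_congr rfl fun a ha => ?_
    rw [mem_Ico] at ha
    rw [Nat.sub_sub_self ha.2.le, mul_comm]
  rw [two_mul]
  nth_rw 2 [← reflect]
  rw [← sum_add_distrib]
  refine sum_congr rfl fun a ha => ?_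
  rw [← card_filter_not_fst_lt hN (mem_Ico.1 ha).2.le, card_filter_add_card_filter_not]

def withTrace (N : ℕ) (x : Σ _ : ℕ, ℕ × ℕ) : Matrix (Fin 2) (Fin 2) ℤ :=
  !![(x.1 : ℤ), x.2.1; x.2.2, ((N - x.1 : ℕ) : ℤ)]

lemma withTrace_injective (N : ℕ) : Function.Injective (withTrace N) := by
  rintro ⟨a, b, c⟩ ⟨a', b', c'⟩ h
  have h00 := congrFun (congrFun h 0) 0
  have h01 := congrFun (congrFun h 0) 1
  have h10 := congrFun (congrFun h 1) 0
  simp only [withTrace, of_apply, cons_val', cons_val_zero, cons_val_one, empty_val',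
    cons_val_fin_one, Nat.cast_inj] at h00 h01 h10
  subst h00 h01 h10
  rfl

lemma setOf_mem_closure_trace_eq_image {N : ℕ} (hN : 3 ≤ N) :
    {C | C ∈ Submonoid.closure {A, B} ∧ C.trace = N} =
      ((Ico 1 N).sigma fun a => (a * (N - a) - 1).divisorsAntidiagonal).image (withTrace N) := by
  ext C
  simp only [Set.mem_ofPred_eq, mem_closure_A_B_iff, coe_image, coe_sigma, Set.mem_image,
    Set.mem_sigma_iff, coe_Ico, Set.mem_Ico, mem_coe, Nat.mem_divisorsAntidiagonal, Sigma.exists,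
    Prod.exists]
  constructor
  · rintro ⟨⟨hdet, hC⟩, htr⟩
    obtain ⟨a, ha⟩ := Int.eq_ofNat_of_zero_le (hC 0 0)
    obtain ⟨b, hb⟩ := Int.eq_ofNat_of_zero_le (hC 0 1)
    obtain ⟨c, hc⟩ := Int.eq_ofNat_of_zero_le (hC 1 0)
    obtain ⟨d, hd⟩ := Int.eq_ofNat_of_zero_le (hC 1 1)
    rw [det_fin_two, ha, hb, hc, hd] at hdet
    rw [trace_fin_two, ha, hd] at htr
    have hdet' : a * d = b * c + 1 := by exact_mod_cast (by linarith : (a * d : ℤ) = b * c + 1)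
    obtain rfl : N = a + d := by exact_mod_cast htr.symm
    have had : a ≠ 0 ∧ d ≠ 0 := by
      constructor <;> rintro rfl <;> simp at hdet'
    have hbc : b * c ≠ 0 := by
      intro hbc
      rw [hbc, zero_add, mul_eq_one] at hdet'
      omega
    refine ⟨a, b, c, ⟨⟨by omega, by omega⟩, ?_, ?_⟩, ?_⟩
    · rw [Nat.add_sub_cancel_left]; omega
    · rw [Nat.add_sub_cancel_left]; omega
    · rw [eta_fin_two C, withTrace, ha, hb, hc, hd, Nat.add_sub_cancel_left]
  · rintro ⟨a, b, c, ⟨⟨ha1, haN⟩, hbc, hne⟩, rfl⟩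
    have hbc' : (b * c + 1 : ℤ) = a * ((N - a : ℕ) : ℤ) := by
      exact_mod_cast (by omega : b * c + 1 = a * (N - a))
    refine ⟨⟨?_, fun i j => ?_⟩, ?_⟩
    · simp only [withTrace, det_fin_two_of]
      linarith
    · fin_cases i <;> fin_cases j <;> simp [withTrace]
    · simp only [withTrace, trace_fin_two_of]
      omega

lemma Phi_eq_sum_card_divisorsAntidiagonal {N : ℕ} (hN : 3 ≤ N) :
    Phi N = ∑ a ∈ Ico 1 N, #(a * (N - a) - 1).divisorsAntidiagonal := by
  rw [Phi, setOf_mem_closure_trace_eq_image hN, Set.ncard_coe_finset,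
    card_image_of_injective _ (withTrace_injective N), card_sigma]

lemma dLt_natCast_eq_card_filter (a : ℕ) {t : ℕ} (ht : t ≠ 0) :
    dLt a t = #{x ∈ t.divisorsAntidiagonal | x.1 < a} := by
  rw [← Nat.map_div_right_divisors, filter_map, card_map, dLt, ← Set.ncard_coe_finset]
  congr 1
  ext k
  simp only [Set.mem_ofPred_eq, coe_filter, Nat.mem_divisors, Function.comp_apply,
    Nat.cast_lt]
  exact ⟨fun ⟨hk, _, hka⟩ => ⟨⟨hk, ht⟩, hka⟩,
    fun ⟨⟨hk, _⟩, hka⟩ => ⟨hk, Nat.pos_of_dvd_of_pos hk (Nat.pos_of_ne_zero ht), hka⟩⟩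

lemma sum_dLt_eq_sum_card_filter {N : ℕ} (hN : 3 ≤ N) :
    ∑ m ∈ (Ioo (-(N : ℤ)) N).filter
        (fun m => m ^ 2 < (N : ℤ) ^ 2 - 4 ∧ m % 2 = (N : ℤ) % 2),
      dLt (((m : ℝ) + N) / 2) (((N : ℤ) ^ 2 - 4 - m ^ 2) / 4).toNat =
    ∑ a ∈ Ico 1 N, #{x ∈ (a * (N - a) - 1).divisorsAntidiagonal | x.1 < a} := by
  symm
  refine sum_nbij' (fun a => 2 * a - N) (fun m => ((m + N) / 2).toNat) ?_ ?_ ?_ ?_ ?_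
  · intro a ha
    rw [mem_Ico] at ha
    have hprod : (2 : ℤ) ≤ a * (N - a) := by nlinarith
    simp only [mem_filter, mem_Ioo]
    refine ⟨⟨by omega, by omega⟩, by nlinarith, by omega⟩
  · intro m hm
    simp only [mem_filter, mem_Ioo] at hm
    rw [mem_Ico]
    omega
  · intro a _
    simp
  · intro m hm
    simp only [mem_filter, mem_Ioo] at hm
    omega
  · intro a ha
    rw [mem_Ico] at ha
    have hprod : 2 ≤ a * (N - a) := by zify [ha.2.le]; nlinarith
    have hmid : (((2 * a - N : ℤ) : ℝ) + N) / 2 = a := by push_cast; ring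
    have hdisc : (((N : ℤ) ^ 2 - 4 - (2 * a - N) ^ 2) / 4).toNat = a * (N - a) - 1 := by
      have hsub : ((a * (N - a) - 1 : ℕ) : ℤ) = a * (N - a) - 1 := by
        rw [Nat.cast_sub (by omega), Nat.cast_mul, Nat.cast_sub ha.2.le, Nat.cast_one]
      rw [show (N : ℤ) ^ 2 - 4 - (2 * a - N) ^ 2 = 4 * ((a * (N - a) - 1 : ℕ) : ℤ) by
        rw [hsub]; ring, Int.mul_ediv_cancel_left _ four_ne_zero, Int.toNat_natCast]
    rw [hmid, hdisc, dLt_natCast_eq_card_filter a (by omega)]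

theorem stmt5 (N : ℕ) (hN : 3 ≤ N) :
    Phi (N : ℤ) = 2 * ∑ m ∈ (Finset.Ioo (-(N : ℤ)) (N : ℤ)).filter
        (fun m => m ^ 2 < (N : ℤ) ^ 2 - 4 ∧ m % 2 = (N : ℤ) % 2),
      dLt (((m : ℝ) + (N : ℝ)) / 2) (((N : ℤ) ^ 2 - 4 - m ^ 2) / 4).toNat := by
  rw [Phi_eq_sum_card_divisorsAntidiagonal hN, sum_card_divisorsAntidiagonal_eq_two_mul hN,
    sum_dLt_eq_sum_card_filter hN]
end

section
/- Let N ≥ 3 and let q be an integer with 1 ≤ q < N. Then the number of pairs (p, t) of integers with 1 ≤ p < q, t ≥ 0, gcd(p, q) = 1 and q + inv_p(q) + p·t = N equals the number of positive divisors p of qN − q² − 1 with p < q, i.e., equals d_q(qN − q² − 1). -/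
open Matrix

/-- For coprime positive `m`, `x`, this is the unique `y ∈ {1, …, m}` with
`x * y ≡ 1 [MOD m]`. -/
def invMod (m x : ℕ) : ℕ := if m = 1 then 1 else ((x : ZMod m)⁻¹).val

lemma invMod_spec (p q : ℕ) (hp : 0 < p) (h : Nat.Coprime q p) :
    1 ≤ invMod p q ∧ invMod p q ≤ p ∧ q * invMod p q ≡ 1 [MOD p] := by
  unfold invMod
  rcases eq_or_lt_of_le (Nat.one_le_iff_ne_zero.mpr hp.ne') with h1 | h1
  · simp [← h1, Nat.ModEq, Nat.mod_one]
  · have hne : p ≠ 1 := by omega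
    rw [if_neg hne]
    haveI : Fact (1 < p) := ⟨h1⟩
    set v := ((q : ZMod p)⁻¹).val with hv
    have hmul : (q : ZMod p) * (q : ZMod p)⁻¹ = 1 := ZMod.coe_mul_inv_eq_one q h
    have hcast : ((v : ℕ) : ZMod p) = (q : ZMod p)⁻¹ := (ZMod.natCast_val _).trans (ZMod.cast_id _ _)
    have hmod : q * v ≡ 1 [MOD p] := by
      rw [← ZMod.natCast_eq_natCast_iff]
      push_cast
      rw [hcast, hmul]
    have hvlt : v < p := ZMod.val_lt _
    have hvne : v ≠ 0 := by
      intro h0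
      rw [h0, Nat.cast_zero] at hcast
      rw [← hcast, mul_zero] at hmul
      exact one_ne_zero hmul.symm
    exact ⟨Nat.one_le_iff_ne_zero.mpr hvne, hvlt.le, hmod⟩

theorem stmt9 (N q : ℕ) (hN : 3 ≤ N) (hq1 : 1 ≤ q) (hqN : q < N) :
    {x : ℕ × ℕ | 1 ≤ x.1 ∧ x.1 < q ∧ Nat.gcd x.1 q = 1 ∧
        q + invMod x.1 q + x.1 * x.2 = N}.ncard =
      dLt (q : ℝ) (q * N - q ^ 2 - 1) := by
  set M := q * N - q ^ 2 - 1 with hM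
  set A : Set (ℕ × ℕ) := {x : ℕ × ℕ | 1 ≤ x.1 ∧ x.1 < q ∧ Nat.gcd x.1 q = 1 ∧
        q + invMod x.1 q + x.1 * x.2 = N} with hA
  have hsq : q ^ 2 = q * q := sq q
  have hMeq : M + 1 = q * (N - q) := by
    have h0 : q * (N - q) + q * q = q * N := by
      rw [← Nat.mul_add, Nat.sub_add_cancel hqN.le]
    have h3 : q * q + q ≤ q * N := by
      calc q * q + q = q * (q + 1) := by ring
        _ ≤ q * N := Nat.mul_le_mul_left q (by omega)
    omega
  have himg : Prod.fst '' A = {k : ℕ | k ∣ M ∧ 0 < k ∧ (k : ℝ) < (q:ℝ)} := by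
    ext k
    simp only [Set.mem_image, Set.mem_setOf_eq, hA]
    constructor
    · rintro ⟨⟨p, t⟩, ⟨h1, h2, h3, h4⟩, rfl⟩
      simp only at h1 h2 h3 h4 ⊢
      have hcop : Nat.Coprime q p := (Nat.coprime_comm.mp h3)
      obtain ⟨hy1, hy2, hy3⟩ := invMod_spec p q (by omega) hcop
      set y := invMod p q
      -- p ∣ q*y - 1
      obtain ⟨c, hc⟩ := (Nat.modEq_iff_dvd' (Nat.mul_pos (by omega) (by omega) : 1 ≤ q * y)).mp hy3.symm
      refine ⟨⟨c + q * t, ?_⟩, by omega, by exact_mod_cast h2⟩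
      -- M = q*y + q*p*t - 1  and q*y - 1 = p*c
      have hqN' : q * N = q * q + q * y + q * (p * t) := by rw [← h4]; ring
      have : M = q * y - 1 + p * (q * t) := by
        have h5 : q * (p * t) = p * (q * t) := by ring
        have h6 : 1 ≤ q * y := Nat.mul_pos (by omega) (by omega)
        omega
      rw [this, hc]; ring
    · rintro ⟨hk1, hk2, hk3⟩
      have hkq : k < q := by exact_mod_cast hk3
      have hcopr : Nat.Coprime q k := by
        have hd : Nat.gcd k q ∣ 1 := by
          have d1 : Nat.gcd k q ∣ M := dvd_trans (Nat.gcd_dvd_left _ _) hk1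
          have d2 : Nat.gcd k q ∣ q * (N - q) := Dvd.dvd.mul_right (Nat.gcd_dvd_right _ _) _
          have : Nat.gcd k q ∣ M + 1 - M := Nat.dvd_sub (hMeq ▸ d2) d1
          simpa using this
        exact Nat.coprime_comm.mp (Nat.eq_one_of_dvd_one hd)
      obtain ⟨hy1, hy2, hy3⟩ := invMod_spec k q hk2 hcopr
      set y := invMod k q with hyy
      -- q*(N-q) ≡ 1 [MOD k]
      have hNq1 : 1 ≤ N - q := by omega
      have hm1 : q * (N - q) ≡ 1 [MOD k] := by
        rw [← hMeq]
        exact (Nat.modEq_iff_dvd' (by omega)).mpr (by simpa using hk1) |>.symm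
      have hm2 : q * (N - q) ≡ q * y [MOD k] := hm1.trans hy3.symm
      have hm3 : N - q ≡ y [MOD k] := hm2.cancel_left_of_coprime (Nat.coprime_comm.mp hcopr)
      have hyle : y ≤ N - q := by
        by_contra hlt
        push_neg at hlt
        obtain ⟨c, hc⟩ := (Nat.modEq_iff_dvd' hlt.le).mp hm3
        rcases Nat.eq_zero_or_pos c with rfl | hc0
        · omega
        · have : k ≤ y - (N - q) := hc ▸ Nat.le_mul_of_pos_right k hc0
          omega
      obtain ⟨t, ht⟩ := (Nat.modEq_iff_dvd' hyle).mp hm3.symm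
      refine ⟨(k, t), ⟨hk2, hkq, Nat.coprime_comm.mp hcopr, ?_⟩, rfl⟩
      simp only [← hyy]
      omega
  have hinj : Set.InjOn Prod.fst A := by
    rintro ⟨p, t1⟩ ha ⟨p', t2⟩ hb (h : p = p')
    subst h
    obtain ⟨h1, h2, h3, h4⟩ := ha
    obtain ⟨h1', h2', h3', h4'⟩ := hb
    simp only at h4 h4' h1 ⊢
    have : t1 = t2 := by
      have := h4.trans h4'.symm
      exact Nat.eq_of_mul_eq_mul_left (by omega : 0 < p) (by omega)
    simp [this]
  calc A.ncard = (Prod.fst '' A).ncard := (Set.ncard_image_of_injOn hinj).symm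
    _ = dLt (q : ℝ) M := by rw [himg]; rfl
end
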